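/- arXiv:2101.06433 — 7 statements merged into one kernel-verified Lean document; each statement's English description precedes it below -/
import Mathlib

section
/- Let N, N₁, N₂, K be positive integers with N₁ + N₂ = N + 1. Let z₁,…,z_K ∈ ℂ with |z_k| = 1, s₁,…,s_K ∈ ℂ, and y ∈ ℂ^N with y_j = Σ_{k=1}^K s_k · z_k^{j−1}. Then J_{N₁} · conj(H(y)) · J_{N₂} = A_{N₁}(z) · conj(S) · Z^{1−N} · A_{N₂}(z)ᵀ, where S = diag(s₁,…,s_K) and Z = diag(z₁,…,z_K), and consequently the double Hankel matrix D(y) = [H(y) | J_{N₁}·conj(H(y))·J_{N₂}] satisfies rank(D(y)) ≤ K. -/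
open Matrix

/-- The `N₁ × N₂` Hankel matrix of a signal `y ∈ ℂ^N`, where `N₁ + N₂ = N + 1`. -/
noncomputable def hankelM {N : ℕ} (N₁ N₂ : ℕ) (h : N₁ + N₂ = N + 1) (y : Fin N → ℂ) :
    Matrix (Fin N₁) (Fin N₂) ℂ :=
  fun j l => y ⟨j.1 + l.1, by have := j.2; have := l.2; omega⟩

/-- The `m × K` Vandermonde matrix with nodes `z`. -/
noncomputable def vandM (m : ℕ) {K : ℕ} (z : Fin K → ℂ) : Matrix (Fin m) (Fin K) ℂ :=
  fun n k => z k ^ (n : ℕ)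

/-- The `m × m` reversal matrix `J_m`, with ones on the anti-diagonal. -/
noncomputable def revM (m : ℕ) : Matrix (Fin m) (Fin m) ℂ :=
  fun i j => if i.1 + j.1 + 1 = m then 1 else 0

/-- The double Hankel matrix `D(y) = [H(y) | J_{N₁} ⬝ conj(H(y)) ⬝ J_{N₂}]`. -/
noncomputable def dHankel {N : ℕ} (N₁ N₂ : ℕ) (h : N₁ + N₂ = N + 1) (y : Fin N → ℂ) :
    Matrix (Fin N₁) (Fin N₂ ⊕ Fin N₂) ℂ :=
  Matrix.fromCols (hankelM N₁ N₂ h y)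
    (revM N₁ * (hankelM N₁ N₂ h y).map (starRingEnd ℂ) * revM N₂)

/-!
Writing `y_j = ∑ₖ sₖ zₖ^j` factors the Hankel matrix as `H(y) = A_{N₁} S A_{N₂}ᵀ`. Reversing rows and
columns sends the index `i + j` to `N - 1 - i - j`, and on the unit circle `conj zₖ = zₖ⁻¹`, so
`conj (zₖ^(N-1-i-j)) = zₖ^i · zₖ^(1-N) · zₖ^j`: the conjugated block factors through the same
Vandermonde matrix `A_{N₁}(z)`. Hence both blocks of `D(y)` have column space inside that of the
`N₁ × K` matrix `A_{N₁}(z)`, and `rank D(y) ≤ K`.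
-/

lemma revM_mul_apply {m : ℕ} {n : Type*} (A : Matrix (Fin m) n ℂ) (i : Fin m) (j : n) :
    (revM m * A) i j = A i.rev j := by
  rw [mul_apply, Finset.sum_eq_single i.rev]
  · simp [revM, Fin.rev]
    omega
  · intro b _ hb
    have : (i : ℕ) + b + 1 ≠ m := fun hc => hb (Fin.ext (by simp [Fin.rev]; omega))
    simp [revM, this]
  · simp

lemma mul_revM_apply {l : Type*} {n : ℕ} (A : Matrix l (Fin n) ℂ) (i : l) (j : Fin n) :
    (A * revM n) i j = A i j.rev := by
  rw [mul_apply, Finset.sum_eq_single j.rev]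
  · simp [revM, Fin.rev]
    omega
  · intro b _ hb
    have : (b : ℕ) + j + 1 ≠ n := fun hc => hb (Fin.ext (by simp [Fin.rev]; omega))
    simp [revM, this]
  · simp

lemma vandM_mul_diagonal_mul_transpose_apply {m n K : ℕ} (z d : Fin K → ℂ) (i : Fin m)
    (j : Fin n) :
    (vandM m z * diagonal d * (vandM n z)ᵀ) i j = ∑ k, z k ^ (i : ℕ) * d k * z k ^ (j : ℕ) := by
  simp only [mul_apply (M := vandM m z * diagonal d), mul_diagonal, transpose_apply, vandM]

lemma hankelM_eq_vandM_mul {N N₁ N₂ K : ℕ} (h : N₁ + N₂ = N + 1) (z s : Fin K → ℂ)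
    (y : Fin N → ℂ) (hy : ∀ j : Fin N, y j = ∑ k, s k * z k ^ (j : ℕ)) :
    hankelM N₁ N₂ h y = vandM N₁ z * diagonal s * (vandM N₂ z)ᵀ := by
  ext i j
  rw [vandM_mul_diagonal_mul_transpose_apply, hankelM, hy]
  exact Finset.sum_congr rfl fun k _ => by rw [pow_add]; ring

lemma conj_pow_eq_zpow_neg {z : ℂ} (hz : ‖z‖ = 1) (n : ℕ) :
    starRingEnd ℂ z ^ n = z ^ (-(n : ℤ)) := by
  rw [← Complex.inv_eq_conj hz, _root_.zpow_neg, zpow_natCast, inv_pow]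

lemma revM_mul_conj_hankelM_mul_revM {N N₁ N₂ K : ℕ} (h : N₁ + N₂ = N + 1)
    (z s : Fin K → ℂ) (hz : ∀ k, ‖z k‖ = 1) (y : Fin N → ℂ)
    (hy : ∀ j : Fin N, y j = ∑ k, s k * z k ^ (j : ℕ)) :
    revM N₁ * (hankelM N₁ N₂ h y).map (starRingEnd ℂ) * revM N₂ =
      vandM N₁ z * diagonal (fun k => starRingEnd ℂ (s k)) *
        diagonal (fun k => z k ^ ((1 : ℤ) - (N : ℤ))) * (vandM N₂ z)ᵀ := by
  ext i j
  rw [mul_revM_apply, revM_mul_apply, Matrix.mul_assoc (vandM N₁ z), diagonal_mul_diagonal,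
    vandM_mul_diagonal_mul_transpose_apply, map_apply, hankelM, hy, map_sum]
  refine Finset.sum_congr rfl fun k _ => ?_
  have hz0 : z k ≠ 0 := norm_ne_zero_iff.mp (by rw [hz k]; exact one_ne_zero)
  have hexp : -(((i.rev : ℕ) + (j.rev : ℕ) : ℕ) : ℤ) = (i : ℕ) + ((1 : ℤ) - N) + (j : ℕ) := by
    simp only [Fin.val_rev]
    omega
  rw [map_mul, map_pow, conj_pow_eq_zpow_neg (hz k), hexp, zpow_add₀ hz0, zpow_add₀ hz0,
    zpow_natCast, zpow_natCast]
  ring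

theorem statement2_general (N N₁ N₂ K : ℕ)
    (h : N₁ + N₂ = N + 1) (z s : Fin K → ℂ) (hz : ∀ k, ‖z k‖ = 1)
    (y : Fin N → ℂ) (hy : ∀ j : Fin N, y j = ∑ k, s k * z k ^ (j : ℕ)) :
    revM N₁ * (hankelM N₁ N₂ h y).map (starRingEnd ℂ) * revM N₂ =
      vandM N₁ z * Matrix.diagonal (fun k => starRingEnd ℂ (s k)) *
        Matrix.diagonal (fun k => z k ^ ((1 : ℤ) - (N : ℤ))) * (vandM N₂ z)ᵀ ∧
      (dHankel N₁ N₂ h y).rank ≤ K := by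
  have hconj := revM_mul_conj_hankelM_mul_revM h z s hz y hy
  refine ⟨hconj, ?_⟩
  have hD : dHankel N₁ N₂ h y = vandM N₁ z * fromCols (diagonal s * (vandM N₂ z)ᵀ)
      (diagonal (fun k => starRingEnd ℂ (s k)) *
        diagonal (fun k => z k ^ ((1 : ℤ) - (N : ℤ))) * (vandM N₂ z)ᵀ) := by
    rw [mul_fromCols, dHankel, hconj, hankelM_eq_vandM_mul h z s y hy]
    simp only [Matrix.mul_assoc]
  rw [hD]
  exact (rank_mul_le_left _ _).trans (rank_le_width _)

theorem statement2 (N N₁ N₂ K : ℕ) (hN : 0 < N) (hN₁ : 0 < N₁) (hN₂ : 0 < N₂) (hK : 0 < K)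
    (h : N₁ + N₂ = N + 1) (z s : Fin K → ℂ) (hz : ∀ k, ‖z k‖ = 1)
    (y : Fin N → ℂ) (hy : ∀ j : Fin N, y j = ∑ k, s k * z k ^ (j : ℕ)) :
    revM N₁ * (hankelM N₁ N₂ h y).map (starRingEnd ℂ) * revM N₂ =
      vandM N₁ z * Matrix.diagonal (fun k => starRingEnd ℂ (s k)) *
        Matrix.diagonal (fun k => z k ^ ((1 : ℤ) - (N : ℤ))) * (vandM N₂ z)ᵀ ∧
      (dHankel N₁ N₂ h y).rank ≤ K :=
  statement2_general N N₁ N₂ K h z s hz y hy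
end

section
/- Let N, K, K' be positive integers with N ≥ K + K'. Let z₁,…,z_K ∈ ℂ be pairwise distinct with s₁,…,s_K ∈ ℂ all nonzero, and let w₁,…,w_{K'} ∈ ℂ be pairwise distinct with t₁,…,t_{K'} ∈ ℂ all nonzero. If Σ_{k=1}^K s_k · z_k^{j−1} = Σ_{k=1}^{K'} t_k · w_k^{j−1} for all j = 1,…,N, then K = K' and there exists a permutation π of {1,…,K} such that w_{π(k)} = z_k and t_{π(k)} = s_k for all k. In other words, a signal of length N admits at most one decomposition into at most K complex exponentials with distinct poles and nonzero amplitudes when N ≥ 2K. -/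
/-!
Encode a decomposition `(z, s)` as the finitely supported function `μ = ∑ₖ sₖ δ_{zₖ}` on `ℂ`;
the signal is then its sequence of moments `∑ₓ μ(x) xʲ`. The difference of two decompositions of the
same signal is supported on at most `K + K' ≤ N` points and has vanishing moments of order
`< N`, so it is zero by the invertibility of the Vandermonde matrix. Since the poles are
distinct and the amplitudes nonzero, the poles are recovered as the support and the amplitudes
as the values.
-/

open Finset Finsupp

namespace Finsupp

variable {R : Type*} [CommRing R]

theorem eq_zero_of_linearCombination_pow_eq_zero [IsDomain R] {N : ℕ} {μ : R →₀ R}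
    (hμ : #μ.support ≤ N) (h : ∀ j < N, linearCombination R (· ^ j) μ = 0) : μ = 0 := by
  set e := μ.support.equivFin
  set v : Fin #μ.support → R := fun i => e.symm i
  have hv : Function.Injective v := Subtype.val_injective.comp e.symm.injective
  have hvanish : (fun i => μ (v i)) = 0 := by
    refine Matrix.eq_zero_of_forall_pow_sum_mul_pow_eq_zero hv fun j => ?_
    rw [← h j (by omega), linearCombination_apply, Finsupp.sum]
    exact (e.symm.sum_comp _).trans (Finset.sum_coe_sort μ.support fun a => μ a • a ^ (j : ℕ))
  ext x
  by_contra hx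
  exact hx (by simpa [v] using congrFun hvanish (e ⟨x, mem_support_iff.2 hx⟩))

variable {ι : Type*} [Fintype ι]

theorem linearCombination_pow_sum_single (z s : ι → R) (j : ℕ) :
    linearCombination R (· ^ j) (∑ k, single (z k) (s k)) = ∑ k, s k * z k ^ j := by
  simp [map_sum, linearCombination_single]

theorem card_support_sum_single_le (z s : ι → R) :
    #(∑ k, single (z k) (s k)).support ≤ Fintype.card ι := by
  classical
  calc #(∑ k, single (z k) (s k)).support ≤ #(univ.image z) :=
        card_le_card <| support_finsetSum.trans <| biUnion_subset.2 fun k _ =>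
          support_single_subset.trans (singleton_subset_iff.2 (mem_image_of_mem z (mem_univ k)))
    _ ≤ Fintype.card ι := card_image_le

theorem sum_single_apply_of_injective {z : ι → R} (s : ι → R) (hz : Function.Injective z)
    (k : ι) :
    (∑ i, single (z i) (s i)) (z k) = s k := by
  classical
  simp [finsetSum_apply, single_apply, hz.eq_iff]

theorem sum_single_apply_ne_zero_iff {z s : ι → R} (hz : Function.Injective z)
    (hs : ∀ k, s k ≠ 0) (x : R) : (∑ k, single (z k) (s k)) x ≠ 0 ↔ x ∈ Set.range z := by
  constructor
  · intro hx
    by_contra hxz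
    rw [finsetSum_apply] at hx
    exact hx (sum_eq_zero fun k _ => single_eq_of_ne fun hk => hxz ⟨k, hk.symm⟩)
  · rintro ⟨k, rfl⟩
    rw [sum_single_apply_of_injective s hz]
    exact hs k

end Finsupp

theorem Function.Injective.exists_equiv_comp_eq_of_range_eq {α β γ : Type*} {f : α → γ}
    {g : β → γ} (hf : Function.Injective f) (hg : Function.Injective g)
    (h : Set.range f = Set.range g) : ∃ π : α ≃ β, ∀ a, g (π a) = f a :=
  ⟨(Equiv.ofInjective f hf).trans ((Equiv.setCongr h).trans (Equiv.ofInjective g hg).symm),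
    fun a => by simp [Equiv.apply_ofInjective_symm]⟩

theorem statement5_general (N K K' : ℕ)
    (hNKK' : K + K' ≤ N)
    (z : Fin K → ℂ) (hz : Function.Injective z) (s : Fin K → ℂ) (hs : ∀ k, s k ≠ 0)
    (w : Fin K' → ℂ) (hw : Function.Injective w) (t : Fin K' → ℂ) (ht : ∀ k, t k ≠ 0)
    (h : ∀ j : Fin N, ∑ k, s k * z k ^ (j : ℕ) = ∑ k, t k * w k ^ (j : ℕ)) :
    K = K' ∧ ∃ π : Fin K ≃ Fin K', ∀ k, w (π k) = z k ∧ t (π k) = s k := by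
  have hμν : ∑ k, single (z k) (s k) = ∑ k, single (w k) (t k) := by
    refine sub_eq_zero.1 <| eq_zero_of_linearCombination_pow_eq_zero (N := N) ?_ fun j hj => ?_
    · have hμ := card_support_sum_single_le z s
      have hν := card_support_sum_single_le w t
      rw [Fintype.card_fin] at hμ hν
      exact (card_le_card support_sub).trans <| (card_union_le _ _).trans (by omega)
    · rw [map_sub, linearCombination_pow_sum_single, linearCombination_pow_sum_single,
        h ⟨j, hj⟩, sub_self]
  have hrange : Set.range z = Set.range w := by
    ext x
    rw [← sum_single_apply_ne_zero_iff hz hs, ← sum_single_apply_ne_zero_iff hw ht, hμν]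
  obtain ⟨π, hπ⟩ := hz.exists_equiv_comp_eq_of_range_eq hw hrange
  refine ⟨by simpa using Fintype.card_congr π, π, fun k => ⟨hπ k, ?_⟩⟩
  rw [← sum_single_apply_of_injective t hw, hπ k, ← hμν, sum_single_apply_of_injective s hz]

theorem statement5 (N K K' : ℕ) (hN : 0 < N) (hK : 0 < K) (hK' : 0 < K')
    (hNKK' : K + K' ≤ N)
    (z : Fin K → ℂ) (hz : Function.Injective z) (s : Fin K → ℂ) (hs : ∀ k, s k ≠ 0)
    (w : Fin K' → ℂ) (hw : Function.Injective w) (t : Fin K' → ℂ) (ht : ∀ k, t k ≠ 0)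
    (h : ∀ j : Fin N, ∑ k, s k * z k ^ (j : ℕ) = ∑ k, t k * w k ^ (j : ℕ)) :
    K = K' ∧ ∃ π : Fin K ≃ Fin K', ∀ k, w (π k) = z k ∧ t (π k) = s k :=
  statement5_general N K K' hNKK' z hz s hs w hw t ht h
end

section
/- Let N, K be positive integers with N ≥ 2K + 1. Let y ∈ ℂ^N satisfy y_j = Σ_{k=1}^K s_k · z_k^{j−1} for all j, where z₁,…,z_K are pairwise distinct nonzero complex numbers and s₁,…,s_K are all nonzero. Suppose in addition that the conjugated-backward signal y̆, defined by y̆_j = conj(y_{N−j+1}), satisfies y̆_j = Σ_{k=1}^K s'_k · (z'_k)^{j−1} for all j, where z'₁,…,z'_K are pairwise distinct nonzero complex numbers and s'₁,…,s'_K are all nonzero. Then there exists a permutation π of {1,…,K} such that z_k = 1/conj(z'_{π(k)}) and s_k = conj(s'_{π(k)} · (z'_{π(k)})^{N−1}) for all k. In particular, the map z ↦ 1/conj(z) sends the pole set {z'₁,…,z'_K} bijectively onto {z₁,…,z_K}. -/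
/-!
Conjugating and reversing `y` turns the term `s' z'^(N-1-j)` into
`conj (s' z'^(N-1)) · (1 / conj z')^j`, so `y` has a second `K`-term exponential-sum
representation with nodes `(z')*`. The difference of the two representations is an exponential
sum with at most `2K ≤ N` distinct nodes whose first `N` samples vanish; the Vandermonde matrix
of those nodes is invertible, so its aggregated coefficients vanish, which matches the two
representations node by node.
-/

/-- The conjugated-backward signal `y̆` of `y ∈ ℂ^N`: `y̆_j = conj (y_{N-j+1})`
(in 0-based indexing, `y̆_j = conj (y_{N-1-j})`). -/
noncomputable def conjBack {N : ℕ} (y : Fin N → ℂ) : Fin N → ℂ :=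
  fun j => starRingEnd ℂ (y j.rev)

open Finset Function

theorem Finset.eq_zero_of_forall_sum_mul_pow_eq_zero {R : Type*} [CommRing R] [IsDomain R]
    {T : Finset R} {c : R → R} (h : ∀ j < #T, ∑ x ∈ T, c x * x ^ j = 0) :
    ∀ x ∈ T, c x = 0 := by
  set t : Fin #T → R := fun i => T.equivFin.symm i
  have ht : Injective t := Subtype.val_injective.comp T.equivFin.symm.injective
  have hc : (fun i => c (t i)) = 0 :=
    Matrix.eq_zero_of_forall_pow_sum_mul_pow_eq_zero ht fun i => by
      rw [← h i i.isLt, ← sum_coe_sort T, ← T.equivFin.symm.sum_comp]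
  intro x hx
  simpa [t] using congrFun hc (T.equivFin ⟨x, hx⟩)

theorem sum_fiber_mul_pow {R ι : Type*} [CommSemiring R] [DecidableEq R] [Fintype ι] {T : Finset R}
    {u : ι → R} (hu : ∀ i, u i ∈ T) (v : ι → R) (j : ℕ) :
    ∑ x ∈ T, (∑ i with u i = x, v i) * x ^ j = ∑ i, v i * u i ^ j := by
  rw [← sum_fiberwise_of_maps_to (fun i _ => hu i)]
  refine sum_congr rfl fun x _ => ?_
  rw [sum_mul]
  exact sum_congr rfl fun i hi => by rw [(mem_filter.mp hi).2]

theorem sum_fiber_eq_of_forall_sum_mul_pow_eq {R ι κ : Type*} [CommRing R] [IsDomain R]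
    [DecidableEq R] [Fintype ι] [Fintype κ] {N : ℕ} {u v : ι → R} {u' v' : κ → R}
    (hN : Fintype.card ι + Fintype.card κ ≤ N)
    (h : ∀ j < N, ∑ i, v i * u i ^ j = ∑ i, v' i * u' i ^ j) (x : R) :
    ∑ i with u i = x, v i = ∑ i with u' i = x, v' i := by
  set T := univ.image u ∪ univ.image u'
  have hu : ∀ i, u i ∈ T := fun i => mem_union_left _ (mem_image_of_mem u (mem_univ i))
  have hu' : ∀ i, u' i ∈ T := fun i => mem_union_right _ (mem_image_of_mem u' (mem_univ i))
  have hT : #T ≤ N := (card_union_le _ _).trans <|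
    (add_le_add card_image_le card_image_le).trans hN
  by_cases hx : x ∈ T
  · rw [← sub_eq_zero]
    refine Finset.eq_zero_of_forall_sum_mul_pow_eq_zero
      (c := fun y => ∑ i with u i = y, v i - ∑ i with u' i = y, v' i) (fun j hj => ?_) x hx
    simp only [sub_mul, sum_sub_distrib, sum_fiber_mul_pow hu, sum_fiber_mul_pow hu',
      h j (hj.trans_le hT), sub_self]
  · have hux : ∀ i, u i ≠ x := fun i hi => hx (hi ▸ hu i)
    have hux' : ∀ i, u' i ≠ x := fun i hi => hx (hi ▸ hu' i)
    simp [hux, hux']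

theorem exists_perm_of_forall_sum_mul_pow_eq {R ι : Type*} [CommRing R] [IsDomain R]
    [Fintype ι] {N : ℕ} (hN : 2 * Fintype.card ι ≤ N) {z s w b : ι → R}
    (hz : Injective z) (hw : Injective w) (hs : ∀ k, s k ≠ 0)
    (h : ∀ j < N, ∑ k, s k * z k ^ j = ∑ k, b k * w k ^ j) :
    ∃ π : Equiv.Perm ι, ∀ k, z k = w (π k) ∧ s k = b (π k) := by
  classical
  have hmatch : ∀ k, s k = ∑ i, if w i = z k then b i else 0 := fun k => by
    simpa [hz.eq_iff, sum_filter] using sum_fiber_eq_of_forall_sum_mul_pow_eq (by omega) h (z k)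
  have hex : ∀ k, ∃ i, w i = z k := by
    intro k
    by_contra! hne
    exact hs k (by simp [hmatch k, hne])
  choose π hπ using hex
  have hπ_inj : Injective π := fun k l hkl => hz (by rw [← hπ k, ← hπ l, hkl])
  refine ⟨Equiv.ofBijective π hπ_inj.bijective_of_finite, fun k => ⟨(hπ k).symm, ?_⟩⟩
  rw [hmatch k, sum_eq_single_of_mem (π k) (mem_univ _)
    fun i _ hik => if_neg fun hi => hik (hw (hi.trans (hπ k).symm)), if_pos (hπ k),
    Equiv.ofBijective_apply]

theorem apply_eq_sum_of_conjBack_eq_sum {ι : Type*} [Fintype ι] {N : ℕ} {y : Fin N → ℂ}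
    {z' s' : ι → ℂ} (hz'0 : ∀ k, z' k ≠ 0)
    (h : ∀ j, conjBack y j = ∑ k, s' k * z' k ^ (j : ℕ)) (j : Fin N) :
    y j = ∑ k, starRingEnd ℂ (s' k * z' k ^ (N - 1)) * (starRingEnd ℂ (z' k))⁻¹ ^ (j : ℕ) := by
  have hy : y j = starRingEnd ℂ (conjBack y j.rev) := by simp [conjBack]
  rw [hy, h, map_sum]
  refine sum_congr rfl fun k _ => ?_
  have hexp : N - (j + 1) = N - 1 - j := by omega
  rw [Fin.val_rev, hexp, map_mul, map_mul, map_pow, map_pow,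
    pow_sub₀ _ ((map_ne_zero _).mpr (hz'0 k)) (by omega), inv_pow, mul_assoc]

theorem statement6_general (N K : ℕ) (hN : 2 * K + 1 ≤ N)
    (z s : Fin K → ℂ) (hz : Function.Injective z)
    (hs : ∀ k, s k ≠ 0)
    (z' s' : Fin K → ℂ) (hz' : Function.Injective z') (hz'0 : ∀ k, z' k ≠ 0)
    (y : Fin N → ℂ) (hy : ∀ j : Fin N, y j = ∑ k, s k * z k ^ (j : ℕ))
    (hyb : ∀ j : Fin N, conjBack y j = ∑ k, s' k * z' k ^ (j : ℕ)) :
    ∃ π : Equiv.Perm (Fin K), ∀ k,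
      z k = (starRingEnd ℂ (z' (π k)))⁻¹ ∧
      s k = starRingEnd ℂ (s' (π k) * z' (π k) ^ (N - 1)) :=
  exists_perm_of_forall_sum_mul_pow_eq (N := N) (w := fun k => (starRingEnd ℂ (z' k))⁻¹)
    (by rw [Fintype.card_fin]; omega) hz ((inv_injective.comp (starRingEnd ℂ).injective).comp hz')
    hs fun j hj => by rw [← hy ⟨j, hj⟩, apply_eq_sum_of_conjBack_eq_sum hz'0 hyb]

theorem statement6 (N K : ℕ) (hK : 0 < K) (hN : 2 * K + 1 ≤ N)
    (z s : Fin K → ℂ) (hz : Function.Injective z) (hz0 : ∀ k, z k ≠ 0)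
    (hs : ∀ k, s k ≠ 0)
    (z' s' : Fin K → ℂ) (hz' : Function.Injective z') (hz'0 : ∀ k, z' k ≠ 0)
    (hs' : ∀ k, s' k ≠ 0)
    (y : Fin N → ℂ) (hy : ∀ j : Fin N, y j = ∑ k, s k * z k ^ (j : ℕ))
    (hyb : ∀ j : Fin N, conjBack y j = ∑ k, s' k * z' k ^ (j : ℕ)) :
    ∃ π : Equiv.Perm (Fin K), ∀ k,
      z k = (starRingEnd ℂ (z' (π k)))⁻¹ ∧
      s k = starRingEnd ℂ (s' (π k) * z' (π k) ^ (N - 1)) :=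
  statement6_general N K hN z s hz hs z' s' hz' hz'0 y hy hyb
end

section
/- Let N, N₁, N₂ be integers with N₁, N₂ ≥ 2 and N₁ + N₂ = N + 1, and let y ∈ ℂ^N. If rank(H(y)) ≤ 1, then at least one of the following holds: (i) there exist s ∈ ℂ and nonzero z ∈ ℂ such that y_j = s · z^{j−1} for all j = 1,…,N; (ii) y_j = 0 for all j ≥ 2 (only the first entry may be nonzero); (iii) y_j = 0 for all j ≤ N−1 (only the last entry may be nonzero). -/
/-!
A matrix of rank at most one has vanishing `2 × 2` minors. For the Hankel matrix of `y`, the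
minors on two adjacent rows and columns give `y k * y (k + 2) = y (k + 1) ^ 2`, so a single
nonzero interior entry makes every entry nonzero, and then `y` is geometric with ratio
`y 1 / y 0`. If all interior entries vanish, the corner minor gives
`y 0 * y (N - 1) = y (N₂ - 1) * y (N₁ - 1) = 0`.
-/

open Matrix

theorem Matrix.mul_eq_mul_of_rank_le_one {m n R : Type*} [Fintype n] [CommRing R] [IsDomain R]
    {M : Matrix m n R} (hM : M.rank ≤ 1) (i i' : m) (j j' : n) :
    M i j * M i' j' = M i j' * M i' j := by
  have hS : (M.submatrix ![i, i'] ![j, j']).det = 0 := by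
    by_contra hdet
    have h2 := rank_of_det_mem_nonZeroDivisors (mem_nonZeroDivisors_of_ne_zero hdet)
    have := (rank_submatrix_le M ![i, i'] ![j, j']).trans hM
    rw [h2, Fintype.card_fin] at this
    omega
  rwa [det_fin_two, sub_eq_zero] at hS

section HankelMinors

variable {N N₁ N₂ : ℕ} {h : N₁ + N₂ = N + 1} {y : Fin N → ℂ}

theorem hankelM_apply (j : Fin N₁) (l : Fin N₂) :
    hankelM N₁ N₂ h y j l = Function.extend Fin.val y 0 (j + l) :=
  (Fin.val_injective.extend_apply y 0 _).symm

theorem hankelM_mul_eq_sq_of_rank_le_one (hrank : (hankelM N₁ N₂ h y).rank ≤ 1)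
    (hN₁ : 2 ≤ N₁) (hN₂ : 2 ≤ N₂) {k : ℕ} (hk : k + 2 < N) :
    Function.extend Fin.val y 0 k * Function.extend Fin.val y 0 (k + 2) =
      Function.extend Fin.val y 0 (k + 1) ^ 2 := by
  -- the window on rows `j, j + 1` and columns `k - j, k - j + 1` fits inside the matrix
  set j := min k (N₁ - 2) with hj
  have := mul_eq_mul_of_rank_le_one hrank ⟨j, by omega⟩ ⟨j + 1, by omega⟩
    ⟨k - j, by omega⟩ ⟨k - j + 1, by omega⟩
  simp only [hankelM_apply] at this
  rwa [show j + (k - j) = k by omega, show j + 1 + (k - j + 1) = k + 2 by omega,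
    show j + (k - j + 1) = k + 1 by omega, show j + 1 + (k - j) = k + 1 by omega, ← sq] at this

theorem hankelM_corner_of_rank_le_one (hrank : (hankelM N₁ N₂ h y).rank ≤ 1)
    (hN₁ : 0 < N₁) (hN₂ : 0 < N₂) :
    Function.extend Fin.val y 0 0 * Function.extend Fin.val y 0 (N - 1) =
      Function.extend Fin.val y 0 (N₂ - 1) * Function.extend Fin.val y 0 (N₁ - 1) := by
  have := mul_eq_mul_of_rank_le_one hrank ⟨0, hN₁⟩ ⟨N₁ - 1, by omega⟩ ⟨0, hN₂⟩ ⟨N₂ - 1, by omega⟩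
  simp only [hankelM_apply] at this
  convert this using 3 <;> omega

end HankelMinors

theorem ne_zero_of_mul_eq_sq {M₀ : Type*} [MonoidWithZero M₀] [NoZeroDivisors M₀]
    {a : ℕ → M₀} {n : ℕ} (ha : ∀ k, k + 2 < n → a k * a (k + 2) = a (k + 1) ^ 2)
    {k : ℕ} (hk₁ : 1 ≤ k) (hkn : k + 1 < n) (hk : a k ≠ 0) {m : ℕ} (hm : m < n) : a m ≠ 0 := by
  rcases le_total k m with hkm | hmk
  · induction m, hkm using Nat.le_induction with
    | base => exact hk
    | succ m hkm ih =>
      have hrec := ha (m - 1) (by omega)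
      rw [show m - 1 + 1 = m by omega, show m - 1 + 2 = m + 1 by omega] at hrec
      exact right_ne_zero_of_mul (hrec ▸ pow_ne_zero 2 (ih (by omega)))
  · induction hmk using Nat.decreasingInduction with
    | self => exact hk
    | of_succ m hmk ih =>
      exact left_ne_zero_of_mul (ha m (by omega) ▸ pow_ne_zero 2 (ih (by omega)))

theorem eq_mul_pow_of_mul_eq_sq {K : Type*} [Field K]
    {a : ℕ → K} {n : ℕ} (ha : ∀ k, k + 2 < n → a k * a (k + 2) = a (k + 1) ^ 2)
    (hne : ∀ m < n, a m ≠ 0) {m : ℕ} (hm : m < n) : a m = a 0 * (a 1 / a 0) ^ m := by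
  induction m using Nat.twoStepInduction with
  | zero => simp
  | one => field_simp [hne 0 (by omega)]
  | more m ih₀ ih₁ =>
    apply mul_left_cancel₀ (hne m (by omega))
    rw [ha m hm, ih₁ (by omega), ih₀ (by omega)]
    ring

theorem statement8 (N N₁ N₂ : ℕ) (hN₁ : 2 ≤ N₁) (hN₂ : 2 ≤ N₂)
    (h : N₁ + N₂ = N + 1) (y : Fin N → ℂ)
    (hrank : (hankelM N₁ N₂ h y).rank ≤ 1) :
    (∃ s z : ℂ, z ≠ 0 ∧ ∀ j : Fin N, y j = s * z ^ (j : ℕ)) ∨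
      (∀ j : Fin N, 1 ≤ (j : ℕ) → y j = 0) ∨
      (∀ j : Fin N, (j : ℕ) + 1 < N → y j = 0) := by
  have hya (j : Fin N) : y j = Function.extend Fin.val y 0 j :=
    (Fin.val_injective.extend_apply y 0 j).symm
  set a := Function.extend Fin.val y 0
  simp only [hya]
  have hrec (k : ℕ) : k + 2 < N → a k * a (k + 2) = a (k + 1) ^ 2 :=
    hankelM_mul_eq_sq_of_rank_le_one hrank hN₁ hN₂
  by_cases hinterior : ∃ k, 1 ≤ k ∧ k + 1 < N ∧ a k ≠ 0
  · obtain ⟨k, hk₁, hkN, hk⟩ := hinterior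
    have hne (m : ℕ) (hm : m < N) : a m ≠ 0 := ne_zero_of_mul_eq_sq hrec hk₁ hkN hk hm
    exact Or.inl ⟨a 0, a 1 / a 0, div_ne_zero (hne 1 (by omega)) (hne 0 (by omega)),
      fun j => eq_mul_pow_of_mul_eq_sq hrec hne j.2⟩
  · push Not at hinterior
    have hends : a 0 * a (N - 1) = 0 := by
      have hcorner : a 0 * a (N - 1) = a (N₂ - 1) * a (N₁ - 1) :=
        hankelM_corner_of_rank_le_one hrank (by omega) (by omega)
      rw [hcorner, hinterior (N₂ - 1) (by omega) (by omega), zero_mul]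
    rcases mul_eq_zero.mp hends with hfirst | hlast
    · refine Or.inr (Or.inr fun j hj => ?_)
      rcases Nat.eq_zero_or_pos j with hj₀ | hj₀
      · rwa [hj₀]
      · exact hinterior j hj₀ hj
    · refine Or.inr (Or.inl fun j hj => ?_)
      rcases lt_or_ge (j + 1 : ℕ) N with hjN | hjN
      · exact hinterior j hj hjN
      · rwa [show (j : ℕ) = N - 1 by omega]
end

section
/- (Proposition 1, K = 1 case.) Let N, N₁, N₂ be integers with N₁, N₂ ≥ 2 and N₁ + N₂ = N + 1, and let y ∈ ℂ^N. Then rank([H(y) | J_{N₁}·conj(H(y))·J_{N₂}]) ≤ 1 if and only if there exist s ∈ ℂ and z ∈ ℂ with |z| = 1 such that y_j = s · z^{j−1} for all j = 1,…,N. That is, with K = 1 the low-rank double Hankel constraint exactly characterizes undamped single-sinusoid signals. -/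
/-!
All 2×2 minors of `D(y)` vanish. Within the Hankel block they give `y₀ y_{j+l} = y_j y_l` and
`yₙ yₙ₊₂ = yₙ₊₁²`, so `y` is geometric with ratio `z = y₁ / y₀` when `y₀ ≠ 0`, and otherwise
vanishes except possibly at its last entry. Minors mixing the two blocks give the reflection
identity `|y_{j+l}| = |y_{N₁-1-j+l}|`: at `j = l = 0` it reads `|y₀| = |y_{N₁-1}|`, which forces
`|z| = 1`, and at the other corner `|y_{N-1}| = |y_{N₂-1}|`, which kills the last entry.
Conversely, for `|z| = 1` we have `conj z = z⁻¹`, so `D(y)` is the outer product of `(zⁱ)ᵢ` with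
a single row.
-/

open Matrix

open ComplexConjugate

namespace Matrix

variable {m n K : Type*} [Fintype n] [Field K]

theorem exists_eq_vecMulVec_of_rank_le_one {A : Matrix m n K} (hA : A.rank ≤ 1) :
    ∃ u w, A = vecMulVec u w := by
  classical
  rw [rank, Submodule.finrank_le_one_iff_isPrincipal] at hA
  obtain ⟨u, hu⟩ := hA
  have hcol : ∀ k, ∃ c : K, c • u = fun i => A i k := fun k => by
    rw [← Submodule.mem_span_singleton, ← hu]
    exact ⟨Pi.single k 1, by ext i; simp⟩
  choose w hw using hcol
  refine ⟨u, w, ?_⟩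
  ext i k
  rw [vecMulVec_apply, ← congrFun (hw k) i, Pi.smul_apply, smul_eq_mul, mul_comm]

theorem mul_eq_mul_of_rank_le_one_s9 {A : Matrix m n K} (hA : A.rank ≤ 1) (i i' : m) (k k' : n) :
    A i k * A i' k' = A i k' * A i' k := by
  obtain ⟨u, w, rfl⟩ := exists_eq_vecMulVec_of_rank_le_one hA
  simp only [vecMulVec_apply]
  ring

end Matrix

section HankelMinors

variable {K : Type*} [Field K] {N₁ N₂ : ℕ} {f : ℕ → K}

def HankelMinorsVanish (N₁ N₂ : ℕ) (f : ℕ → K) : Prop :=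
  ∀ j j' l l', j < N₁ → j' < N₁ → l < N₂ → l' < N₂ →
    f (j + l) * f (j' + l') = f (j + l') * f (j' + l)

namespace HankelMinorsVanish

theorem mul_add_two (hf : HankelMinorsVanish N₁ N₂ f) (h₁ : 2 ≤ N₁) (h₂ : 2 ≤ N₂) {n : ℕ}
    (hn : n + 4 ≤ N₁ + N₂) : f n * f (n + 2) = f (n + 1) ^ 2 := by
  obtain ⟨j, l, rfl, hj, hl⟩ : ∃ j l, n = j + l ∧ j + 1 < N₁ ∧ l + 1 < N₂ :=
    ⟨min n (N₁ - 2), n - min n (N₁ - 2), by omega, by omega, by omega⟩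
  have := hf j (j + 1) l (l + 1) (by omega) hj (by omega) hl
  rw [sq]
  convert this using 3 <;> omega

theorem eq_zero_of_apply_zero (hf : HankelMinorsVanish N₁ N₂ f) (h₁ : 2 ≤ N₁) (h₂ : 2 ≤ N₂)
    (h0 : f 0 = 0) : ∀ n, n + 2 < N₁ + N₂ → f n = 0
  | 0, _ => h0
  | n + 1, hn => by
    have h := hf.mul_add_two h₁ h₂ (n := n) (by omega)
    rwa [eq_zero_of_apply_zero hf h₁ h₂ h0 n (by omega), zero_mul, eq_comm,
      pow_eq_zero_iff two_ne_zero] at h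

theorem eq_geometric (hf : HankelMinorsVanish N₁ N₂ f) (h₁ : 2 ≤ N₁) (h₂ : 2 ≤ N₂)
    (h0 : f 0 ≠ 0) (n : ℕ) (hn : n + 1 < N₁ + N₂) : f n = f 0 * (f 1 / f 0) ^ n := by
  induction n using Nat.strong_induction_on with
  | _ n ih =>
    obtain _ | _ | n := n
    · simp
    · rw [zero_add, pow_one, mul_div_cancel₀ _ h0]
    obtain ⟨j, l, hjl, hj, hl, hj1, hl1⟩ :
        ∃ j l, j + l = n + 2 ∧ j < N₁ ∧ l < N₂ ∧ 1 ≤ j ∧ 1 ≤ l :=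
      ⟨min (n + 1) (N₁ - 1), n + 2 - min (n + 1) (N₁ - 1), by omega, by omega, by omega,
        by omega, by omega⟩
    have hsplit := hf j 0 l 0 hj (by omega) hl (by omega)
    simp only [add_zero, zero_add] at hsplit
    apply mul_right_cancel₀ h0
    rw [← hjl, hsplit, ih l (by omega) (by omega), ih j (by omega) (by omega), pow_add]
    ring

end HankelMinorsVanish

end HankelMinors

def extendByZero {α : Type*} [Zero α] {N : ℕ} (y : Fin N → α) (n : ℕ) : α :=
  if h : n < N then y ⟨n, h⟩ else 0

@[simp]
theorem extendByZero_val {α : Type*} [Zero α] {N : ℕ} (y : Fin N → α) (j : Fin N) :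
    extendByZero y j = y j :=
  dif_pos j.2

theorem revM_eq_toMatrix (m : ℕ) :
    revM m = (Fin.revPerm.toPEquiv.toMatrix : Matrix (Fin m) (Fin m) ℂ) := by
  ext i j
  simp only [revM, PEquiv.toMatrix_apply, Equiv.toPEquiv_apply, Option.mem_some_iff,
    Fin.revPerm_apply, Fin.ext_iff, Fin.val_rev]
  congr 1
  apply propext
  omega

section dHankel

variable {N N₁ N₂ : ℕ} (h : N₁ + N₂ = N + 1) (y : Fin N → ℂ)

theorem dHankel_apply_inl (i : Fin N₁) (l : Fin N₂) :
    dHankel N₁ N₂ h y i (Sum.inl l) = extendByZero y (i + l) := by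
  rw [dHankel, fromCols_apply_inl, hankelM, extendByZero, dif_pos (by omega)]

theorem dHankel_apply_inr (i : Fin N₁) (l : Fin N₂) :
    dHankel N₁ N₂ h y i (Sum.inr l) = conj (extendByZero y (N - 1 - (i + l))) := by
  rw [dHankel, fromCols_apply_inr, revM_eq_toMatrix, revM_eq_toMatrix,
    PEquiv.toMatrix_toPEquiv_mul, PEquiv.mul_toMatrix_toPEquiv]
  simp only [submatrix_apply, map_apply, hankelM, extendByZero, id, Fin.revPerm_symm,
    Fin.revPerm_apply, Fin.val_rev]
  rw [dif_pos (by omega)]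
  congr 3
  omega

theorem hankelMinorsVanish_of_rank_dHankel_le_one (hD : (dHankel N₁ N₂ h y).rank ≤ 1) :
    HankelMinorsVanish N₁ N₂ (extendByZero y) := fun j j' l l' hj hj' hl hl' => by
  simpa only [dHankel_apply_inl] using
    mul_eq_mul_of_rank_le_one_s9 hD ⟨j, hj⟩ ⟨j', hj'⟩ (.inl ⟨l, hl⟩) (.inl ⟨l', hl'⟩)

theorem norm_extendByZero_eq_of_rank_dHankel_le_one (hD : (dHankel N₁ N₂ h y).rank ≤ 1)
    (j l : ℕ) (hj : j < N₁) (hl : l < N₂) :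
    ‖extendByZero y (j + l)‖ = ‖extendByZero y (N₁ - 1 - j + l)‖ := by
  have := mul_eq_mul_of_rank_le_one_s9 hD ⟨j, hj⟩ ⟨N₁ - 1 - j, by omega⟩ (.inl ⟨l, hl⟩)
    (.inr ⟨N₂ - 1 - l, by omega⟩)
  simp only [dHankel_apply_inl, dHankel_apply_inr] at this
  rw [show N - 1 - (N₁ - 1 - j + (N₂ - 1 - l)) = j + l by omega,
    show N - 1 - (j + (N₂ - 1 - l)) = N₁ - 1 - j + l by omega, mul_comm (conj _),
    Complex.mul_conj', Complex.mul_conj'] at this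
  exact (sq_eq_sq₀ (norm_nonneg _) (norm_nonneg _)).1 (by exact_mod_cast this)

theorem rank_dHankel_le_one_of_eq_geometric {s z : ℂ} (hz : ‖z‖ = 1)
    (hy : ∀ j : Fin N, y j = s * z ^ (j : ℕ)) : (dHankel N₁ N₂ h y).rank ≤ 1 := by
  have hzz : conj z * z = 1 := by rw [mul_comm, Complex.mul_conj', hz]; norm_num
  have hY : ∀ n < N, extendByZero y n = s * z ^ n := fun n hn => by
    rw [extendByZero, dif_pos hn, hy]
  suffices dHankel N₁ N₂ h y = vecMulVec (fun i : Fin N₁ => z ^ (i : ℕ))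
      (Sum.elim (fun l : Fin N₂ => s * z ^ (l : ℕ))
        fun l : Fin N₂ => conj s * conj z ^ (N - 1 - l)) by
    rw [this]
    exact rank_vecMulVec_le _ _
  ext i (l | l)
  · rw [dHankel_apply_inl, hY _ (by omega), vecMulVec_apply, Sum.elim_inl, pow_add]
    ring
  · rw [dHankel_apply_inr, hY _ (by omega), vecMulVec_apply, Sum.elim_inr, map_mul, map_pow,
      show N - 1 - l = N - 1 - (i + l) + i by omega, pow_add]
    linear_combination (-conj s * conj z ^ (N - 1 - (i + l))) * (congrArg (· ^ (i : ℕ)) hzz)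

end dHankel

theorem statement9 (N N₁ N₂ : ℕ) (hN₁ : 2 ≤ N₁) (hN₂ : 2 ≤ N₂)
    (h : N₁ + N₂ = N + 1) (y : Fin N → ℂ) :
    (dHankel N₁ N₂ h y).rank ≤ 1 ↔
      ∃ s z : ℂ, ‖z‖ = 1 ∧ ∀ j : Fin N, y j = s * z ^ (j : ℕ) := by
  refine ⟨fun hD => ?_, fun ⟨s, z, hz, hy⟩ => rank_dHankel_le_one_of_eq_geometric h y hz hy⟩
  have hY := hankelMinorsVanish_of_rank_dHankel_le_one h y hD
  have hreflect := norm_extendByZero_eq_of_rank_dHankel_le_one h y hD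
  set Y := extendByZero y
  suffices ∃ s z : ℂ, ‖z‖ = 1 ∧ ∀ n < N, Y n = s * z ^ n by
    obtain ⟨s, z, hz, hYn⟩ := this
    exact ⟨s, z, hz, fun j => by simpa [Y] using hYn j j.2⟩
  by_cases h0 : Y 0 = 0
  · have hinit := hY.eq_zero_of_apply_zero hN₁ hN₂ h0
    have hlast := hreflect (N₁ - 1) (N₂ - 1) (by omega) (by omega)
    rw [show N₁ - 1 + (N₂ - 1) = N - 1 by omega,
      show N₁ - 1 - (N₁ - 1) + (N₂ - 1) = N₂ - 1 by omega, hinit (N₂ - 1) (by omega),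
      norm_zero, norm_eq_zero] at hlast
    refine ⟨0, 1, norm_one, fun n hn => ?_⟩
    rw [zero_mul]
    rcases Nat.lt_or_ge n (N - 1) with hn' | hn'
    · exact hinit n (by omega)
    · rwa [show n = N - 1 by omega]
  · refine ⟨Y 0, Y 1 / Y 0, ?_, fun n hn => hY.eq_geometric hN₁ hN₂ h0 n (by omega)⟩
    have hfirst := hreflect 0 0 (by omega) (by omega)
    rw [add_zero, Nat.sub_zero, add_zero, hY.eq_geometric hN₁ hN₂ h0 (N₁ - 1) (by omega),
      norm_mul, norm_pow, left_eq_mul₀ (norm_ne_zero_iff.2 h0)] at hfirst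
    exact (pow_eq_one_iff_of_nonneg (norm_nonneg _) (by omega)).1 hfirst
end

section
/- (Theorem 1, probabilistic part.) Let N, N₁, N₂, K be positive integers with N₁ + N₂ = N + 1 and N₂ < K ≤ min(N₁ − 1, 2N₂). Let z₁,…,z_K ∈ ℂ be pairwise distinct with |z_k| = 1 and let r₁,…,r_K > 0 be fixed. Let (u₁,…,u_K) be a random element of the K-dimensional torus (the unit circle in ℂ)^K whose distribution is absolutely continuous with respect to Haar measure, set s_k = r_k · u_k, and let y ∈ ℂ^N with y_j = Σ_{k=1}^K s_k · z_k^{j−1}. Then with probability one the double Hankel matrix D(y) = [H(y) | J_{N₁}·conj(H(y))·J_{N₂}] has rank exactly K and its column space equals the column space of A_{N₁}(z). -/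
/-!
With `s_k = r_k u_k` and `|z_k| = 1`, the double Hankel matrix factors as `D(y) = A_{N₁}(z) B`,
where `B = [diag(s) A_{N₂}(z)ᵀ | diag(conj s · conj z^{N-1}) A_{N₂}(z)ᵀ]` is `K × 2N₂`. Since
`K ≤ N₁`, `A_{N₁}(z)` has rank `K`, so both claims follow once `B` has full row rank `K`. The
`K × K` minor of `B` on the first `N₂` columns of the left block and the first `K - N₂` columns
of the right block is, up to the nonzero row factors `r_k conj u_k`, a polynomial in `u` which is
not identically zero: at `u = (1,…,1,0,…,0)` it is block triangular with Vandermonde diagonal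
blocks. A nonzero polynomial vanishes only on a Haar-null subset of the torus (Fubini and
finiteness of roots), and absolute continuity of the law of `u` transfers this to `u`.
-/

open Matrix MeasureTheory

instance AddCircle.nullSingletonClass_volume (T : ℝ) [Fact (0 < T)] :
    NullSingletonClass (volume : Measure (AddCircle T)) where
  measure_singleton x := by
    simpa using AddCircle.volume_closedBall (T := T) (x := x) 0

namespace MvPolynomial

variable {X : Type*} [MeasurableSpace X] {f : X → ℂ}

lemma measurableSet_eval_comp_eq_zero {ι : Type*} [Countable ι] (hf : Measurable f)
    (P : MvPolynomial ι ℂ) : MeasurableSet {x : ι → X | eval (f ∘ x) P = 0} :=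
  ((continuous_eval P).measurable.comp (measurable_pi_lambda _ fun i =>
    hf.comp (measurable_pi_apply i))) (measurableSet_singleton 0)

lemma ae_eval_comp_cons_ne_zero (μ : Measure X) [NullSingletonClass μ]
    (hfi : Function.Injective f) {n : ℕ} {P : MvPolynomial (Fin (n + 1)) ℂ} {s : Fin n → X}
    (hs : eval (f ∘ s) (finSuccEquiv ℂ n P).leadingCoeff ≠ 0) :
    ∀ᵐ a ∂μ, eval (f ∘ Fin.cons a s) P ≠ 0 := by
  set q := (finSuccEquiv ℂ n P).map (eval (f ∘ s))
  have hq : q ≠ 0 := fun hq => hs <| by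
    simpa only [q, Polynomial.coeff_map, Polynomial.coeff_zero, Polynomial.coeff_natDegree] using
      congrArg (·.coeff (finSuccEquiv ℂ n P).natDegree) hq
  have hroots : {a | ¬eval (f ∘ Fin.cons a s) P ≠ 0} ⊆ f ⁻¹' {x | q.IsRoot x} := by
    intro a ha
    simpa [Fin.comp_cons, eval_eq_eval_mv_eval', q] using ha
  exact ae_iff.2 (measure_mono_null hroots
    (((Polynomial.finite_setOfPred_isRoot hq).preimage hfi.injOn).measure_zero μ))

theorem ae_eval_comp_ne_zero (μ : Measure X) [SigmaFinite μ] [NullSingletonClass μ]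
    (hf : Measurable f) (hfi : Function.Injective f) {n : ℕ} {P : MvPolynomial (Fin n) ℂ}
    (hP : P ≠ 0) : ∀ᵐ x ∂Measure.pi (fun _ : Fin n => μ), eval (f ∘ x) P ≠ 0 := by
  induction n with
  | zero =>
    obtain ⟨c, rfl⟩ := C_surjective (Fin 0) P
    exact ae_of_all _ fun x => by simpa using hP
  | succ n ih =>
    let e := MeasurableEquiv.piFinSuccAbove (fun _ : Fin (n + 1) => X) 0
    have he : ∀ a s, e.symm (a, s) = Fin.cons a s := fun a s => by
      rw [← Fin.insertNth_zero']; rfl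
    have hS : MeasurableSet {p : X × (Fin n → X) | eval (f ∘ Fin.cons p.1 p.2) P = 0} := by
      convert e.symm.measurable (measurableSet_eval_comp_eq_zero hf P) using 1
      ext p
      simp [he]
    have hlead : (finSuccEquiv ℂ n P).leadingCoeff ≠ 0 :=
      Polynomial.leadingCoeff_ne_zero.2 ((map_ne_zero_iff _ (finSuccEquiv ℂ n).injective).2 hP)
    have hprod : ∀ᵐ p ∂μ.prod (Measure.pi fun _ : Fin n => μ),
        eval (f ∘ Fin.cons p.1 p.2) P ≠ 0 := by
      refine (Measure.ae_prod_iff_ae_ae hS.compl).2 ((Measure.ae_ae_comm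
        (p := fun a s => eval (f ∘ Fin.cons a s) P ≠ 0) hS.compl).2 ?_)
      filter_upwards [ih hlead] with s hs
      exact ae_eval_comp_cons_ne_zero μ hfi hs
    filter_upwards [(measurePreserving_piFinSuccAbove (fun _ => μ) 0).quasiMeasurePreserving.ae
      hprod] with x hx
    simpa [e] using hx

end MvPolynomial

theorem AddCircle.ae_eval_toCircle_ne_zero {T : ℝ} [Fact (0 < T)] {n : ℕ}
    {P : MvPolynomial (Fin n) ℂ} (hP : P ≠ 0) :
    ∀ᵐ u : Fin n → AddCircle T, MvPolynomial.eval (fun k => (toCircle (u k) : ℂ)) P ≠ 0 :=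
  P.ae_eval_comp_ne_zero volume (continuous_subtype_val.comp continuous_toCircle).measurable
    (Subtype.coe_injective.comp (injective_toCircle (Fact.out : 0 < T).ne')) hP

lemma revM_apply {m : ℕ} (i j : Fin m) : revM m i j = if j = i.rev then 1 else 0 := by
  have hi := i.2
  simp only [revM, Fin.ext_iff, Fin.val_rev]
  exact if_congr (by omega) rfl rfl

lemma revM_mul {n : Type*} {m : ℕ} (M : Matrix (Fin m) n ℂ) :
    revM m * M = M.submatrix Fin.rev id := by
  ext i j
  simp [revM_apply, mul_apply]

lemma mul_revM {n : Type*} [Fintype n] {m : ℕ} (M : Matrix n (Fin m) ℂ) :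
    M * revM m = M.submatrix id Fin.rev := by
  ext i j
  simp [revM_apply, mul_apply, ← Fin.rev_eq_iff]

lemma conj_pow_rev {z : ℂ} (hz : ‖z‖ = 1) {m : ℕ} (i : Fin m) :
    starRingEnd ℂ z ^ (i.rev : ℕ) = starRingEnd ℂ z ^ (m - 1) * z ^ (i : ℕ) := by
  have hzc : starRingEnd ℂ z * z = 1 := by
    rw [Complex.conj_mul', hz]; norm_num
  rw [Fin.val_rev, show m - 1 = (m - (i + 1)) + i by omega, pow_add, mul_assoc, ← mul_pow, hzc,
    one_pow, mul_one]

noncomputable def dHankelFactor (N₂ : ℕ) {K : ℕ} (z s t : Fin K → ℂ) :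
    Matrix (Fin K) (Fin N₂ ⊕ Fin N₂) ℂ :=
  fromCols (of fun k l => s k * z k ^ (l : ℕ)) (of fun k l => t k * z k ^ (l : ℕ))

lemma dHankel_eq_vandM_mul {N N₁ N₂ K : ℕ} (h : N₁ + N₂ = N + 1) {z : Fin K → ℂ}
    (hz : ∀ k, ‖z k‖ = 1) (s : Fin K → ℂ) :
    dHankel N₁ N₂ h (fun j => ∑ k, s k * z k ^ (j : ℕ)) =
      vandM N₁ z * dHankelFactor N₂ z s
        (fun k => starRingEnd ℂ (s k) * starRingEnd ℂ (z k) ^ (N₁ - 1 + (N₂ - 1))) := by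
  ext j (l | l)
  · simp only [dHankel, hankelM, vandM, dHankelFactor, fromCols_apply_inl, mul_apply, of_apply]
    refine Finset.sum_congr rfl fun k _ => ?_
    ring
  · simp only [dHankel, fromCols_apply_inr, revM_mul, mul_revM, submatrix_apply, map_apply,
      hankelM, vandM, dHankelFactor, mul_apply, of_apply, id, map_sum, map_mul, map_pow, pow_add]
    refine Finset.sum_congr rfl fun k _ => ?_
    rw [conj_pow_rev (hz k), conj_pow_rev (hz k)]
    ring

namespace Matrix

variable {R : Type*} [Field R]

lemma card_le_rank_of_det_submatrix_ne_zero {m n ι : Type*} [Fintype n] [Fintype ι]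
    [DecidableEq ι] (A : Matrix m n R) (r : ι → m) (c : ι → n) (h : (A.submatrix r c).det ≠ 0) :
    Fintype.card ι ≤ A.rank :=
  (rank_of_isUnit _ ((isUnit_iff_isUnit_det _).2 h.isUnit)).ge.trans (rank_submatrix_le A r c)

lemma range_mulVecLin_mul_of_rank_eq_card {l m n : Type*} [Fintype m] [Fintype n]
    (A : Matrix l m R) (B : Matrix m n R) (hB : B.rank = Fintype.card m) :
    LinearMap.range (A * B).mulVecLin = LinearMap.range A.mulVecLin := by
  rw [mulVecLin_mul, LinearMap.range_comp_of_range_eq_top]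
  exact Submodule.eq_top_of_finrank_eq (by rw [← rank, hB, Module.finrank_fintype_fun_eq_card])

end Matrix

lemma rank_vandM {m K : ℕ} {z : Fin K → ℂ} (hz : Function.Injective z) (hK : K ≤ m) :
    (vandM m z).rank = K := by
  refine le_antisymm (rank_le_width _) ?_
  simpa using (vandM m z).card_le_rank_of_det_submatrix_ne_zero (Fin.castLE hK) id <| by
    have : (vandM m z).submatrix (Fin.castLE hK) id = (vandermonde z)ᵀ := by
      ext i k; simp [vandM, vandermonde]
    rw [this, det_transpose]
    exact det_vandermonde_ne_zero_iff.2 hz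

/- Row `a` of the square minor of `dHankelFactor` (with `s = r w`, `t = conj (r w) c`) divided by
`r_a conj w_a`, with `X a` in place of `w_a`: on the unit circle `w / conj w = w ^ 2`
(see `dHankelFactor_submatrix_eq`). -/
open MvPolynomial in
noncomputable def minorPolyMatrix {p q : ℕ} (ζ c : Fin p ⊕ Fin q → ℂ) :
    Matrix (Fin p ⊕ Fin q) (Fin p ⊕ Fin q) (MvPolynomial (Fin p ⊕ Fin q) ℂ) :=
  fromCols (of fun a i => X a ^ 2 * C (ζ a ^ (i : ℕ))) (of fun a j => C (c a * ζ a ^ (j : ℕ)))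

lemma det_minorPolyMatrix_ne_zero {p q : ℕ} {ζ c : Fin p ⊕ Fin q → ℂ}
    (hζ : Function.Injective ζ) (hc : ∀ a, c a ≠ 0) : (minorPolyMatrix ζ c).det ≠ 0 := by
  have hblocks : (minorPolyMatrix ζ c).map (MvPolynomial.eval (Sum.elim 1 0)) =
      fromBlocks (vandermonde (ζ ∘ Sum.inl))
        (of fun (i : Fin p) (j : Fin q) => c (.inl i) * ζ (.inl i) ^ (j : ℕ)) 0
        (diagonal (c ∘ Sum.inr) * vandermonde (ζ ∘ Sum.inr)) := by
    ext (i | i) (j | j) <;> simp [minorPolyMatrix, vandermonde]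
  have heval : MvPolynomial.eval (Sum.elim 1 0) (minorPolyMatrix ζ c).det ≠ 0 := by
    rw [RingHom.map_det, RingHom.mapMatrix_apply, hblocks, det_fromBlocks_zero₂₁, det_mul,
      det_diagonal]
    exact mul_ne_zero (det_vandermonde_ne_zero_iff.2 (hζ.comp Sum.inl_injective))
      (mul_ne_zero (Finset.prod_ne_zero_iff.2 fun a _ => hc _)
        (det_vandermonde_ne_zero_iff.2 (hζ.comp Sum.inr_injective)))
  exact fun h0 => heval (by rw [h0, map_zero])

lemma dHankelFactor_submatrix_eq {N₂ q K : ℕ} (e : Fin N₂ ⊕ Fin q ≃ Fin K) (hq : q ≤ N₂)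
    (z c : Fin K → ℂ) (r : Fin K → ℝ) {w : Fin K → ℂ} (hw : ∀ k, ‖w k‖ = 1) :
    (dHankelFactor N₂ z (fun k => r k * w k) (fun k => starRingEnd ℂ (r k * w k) * c k)).submatrix
        e (Sum.map id (Fin.castLE hq)) =
      diagonal (fun a => r (e a) * starRingEnd ℂ (w (e a))) *
        (minorPolyMatrix (z ∘ e) (c ∘ e)).map (MvPolynomial.eval (w ∘ e)) := by
  have hwc : ∀ k, starRingEnd ℂ (w k) * w k = 1 := fun k => by
    rw [Complex.conj_mul', hw]; norm_num
  ext a (i | j) <;>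
    simp only [dHankelFactor, minorPolyMatrix, submatrix_apply, Sum.map_inl, Sum.map_inr, id_eq,
      fromCols_apply_inl, fromCols_apply_inr, of_apply, Fin.val_castLE, Function.comp_apply,
      diagonal_mul, map_apply, map_mul, map_pow, Complex.conj_ofReal, MvPolynomial.eval_X,
      MvPolynomial.eval_C]
  · linear_combination (-(r (e a) * w (e a) * z (e a) ^ (i : ℕ))) * hwc (e a)
  · ring

lemma rank_dHankel_eq_and_range_eq {N N₁ N₂ q K : ℕ} (h : N₁ + N₂ = N + 1) (hKN₁ : K ≤ N₁)
    (e : Fin N₂ ⊕ Fin q ≃ Fin K) (hq : q ≤ N₂) {z : Fin K → ℂ} (hz : Function.Injective z)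
    (hzu : ∀ k, ‖z k‖ = 1) {r : Fin K → ℝ} (hr : ∀ k, r k ≠ 0) {w : Fin K → ℂ}
    (hw : ∀ k, ‖w k‖ = 1)
    (hdet : MvPolynomial.eval (w ∘ e) (minorPolyMatrix (z ∘ e)
      (fun a => starRingEnd ℂ (z (e a)) ^ (N₁ - 1 + (N₂ - 1)))).det ≠ 0) :
    (dHankel N₁ N₂ h (fun j => ∑ k, (r k : ℂ) * w k * z k ^ (j : ℕ))).rank = K ∧
      LinearMap.range (dHankel N₁ N₂ h (fun j => ∑ k, (r k : ℂ) * w k * z k ^ (j : ℕ))).mulVecLin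
        = LinearMap.range (vandM N₁ z).mulVecLin := by
  have hD := dHankel_eq_vandM_mul h hzu (fun k => (r k : ℂ) * w k)
  set c : Fin K → ℂ := fun k => starRingEnd ℂ (z k) ^ (N₁ - 1 + (N₂ - 1))
  set B := dHankelFactor N₂ z (fun k => r k * w k) (fun k => starRingEnd ℂ (r k * w k) * c k)
  have hB : B.rank = K := by
    refine le_antisymm ((rank_le_card_height B).trans_eq (Fintype.card_fin K)) ?_
    have hminor : (B.submatrix e (Sum.map id (Fin.castLE hq))).det ≠ 0 := by
      rw [dHankelFactor_submatrix_eq e hq z c r hw, det_mul, det_diagonal,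
        ← RingHom.mapMatrix_apply, ← RingHom.map_det]
      refine mul_ne_zero (Finset.prod_ne_zero_iff.2 fun a _ => mul_ne_zero ?_ ?_) hdet
      · exact_mod_cast hr (e a)
      · exact (map_ne_zero _).2 (norm_ne_zero_iff.1 (by simp [hw]))
    have := B.card_le_rank_of_det_submatrix_ne_zero e _ hminor
    rwa [Fintype.card_congr e, Fintype.card_fin] at this
  have hrange := hD ▸ range_mulVecLin_mul_of_rank_eq_card (vandM N₁ z) B (by simpa using hB)
  exact ⟨by rw [rank, hrange, ← rank, rank_vandM hz hKN₁], hrange⟩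

/- On `Fin K → AddCircle 1`, `volume` is the Haar (probability) measure on the
`K`-dimensional torus; a point `u` on the torus is turned into a point of the unit
circle in `ℂ` by `AddCircle.toCircle`. -/
theorem statement11_general (N N₁ N₂ K : ℕ)
    (h : N₁ + N₂ = N + 1) (hK1 : N₂ < K) (hK2 : K ≤ N₁ - 1) (hK3 : K ≤ 2 * N₂)
    (z : Fin K → ℂ) (hz : Function.Injective z) (hzu : ∀ k, ‖z k‖ = 1)
    (r : Fin K → ℝ) (hr : ∀ k, 0 < r k)
    (Ωp : Type) [MeasureSpace Ωp]
    (u : Ωp → Fin K → AddCircle (1 : ℝ)) (hu : Measurable u)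
    (habs : Measure.map u volume ≪ (volume : Measure (Fin K → AddCircle (1 : ℝ)))) :
    ∀ᵐ ω ∂(volume : Measure Ωp),
      (dHankel N₁ N₂ h
          (fun j : Fin N => ∑ k, (r k : ℂ) * (AddCircle.toCircle (u ω k) : ℂ) * z k ^ (j : ℕ))).rank
          = K ∧
        LinearMap.range (dHankel N₁ N₂ h
          (fun j : Fin N => ∑ k, (r k : ℂ) * (AddCircle.toCircle (u ω k) : ℂ) * z k ^ (j : ℕ))).mulVecLin
          = LinearMap.range (vandM N₁ z).mulVecLin := by
  let e : Fin N₂ ⊕ Fin (K - N₂) ≃ Fin K := finSumFinEquiv.trans (finCongr (by omega))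
  have hminor : MvPolynomial.rename e (minorPolyMatrix (z ∘ e)
      (fun a => starRingEnd ℂ (z (e a)) ^ (N₁ - 1 + (N₂ - 1)))).det ≠ 0 := by
    refine (map_ne_zero_iff _ (MvPolynomial.rename_injective _ e.injective)).2
      (det_minorPolyMatrix_ne_zero (hz.comp e.injective) fun a =>
        pow_ne_zero _ ((map_ne_zero _).2 (norm_ne_zero_iff.1 (by simp [hzu]))))
  filter_upwards [ae_of_ae_map hu.aemeasurable
    (habs.ae_le (AddCircle.ae_eval_toCircle_ne_zero hminor))] with ω hω
  rw [MvPolynomial.eval_rename] at hω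
  exact rank_dHankel_eq_and_range_eq h (by omega) e (by omega) hz hzu (fun k => (hr k).ne')
    (fun k => Circle.norm_coe _) hω

theorem statement11 (N N₁ N₂ K : ℕ) (hN : 0 < N) (hN₁ : 0 < N₁) (hN₂ : 0 < N₂) (hK : 0 < K)
    (h : N₁ + N₂ = N + 1) (hK1 : N₂ < K) (hK2 : K ≤ N₁ - 1) (hK3 : K ≤ 2 * N₂)
    (z : Fin K → ℂ) (hz : Function.Injective z) (hzu : ∀ k, ‖z k‖ = 1)
    (r : Fin K → ℝ) (hr : ∀ k, 0 < r k)
    (Ωp : Type) [MeasureSpace Ωp] (hprob : IsProbabilityMeasure (volume : Measure Ωp))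
    (u : Ωp → Fin K → AddCircle (1 : ℝ)) (hu : Measurable u)
    (habs : Measure.map u volume ≪ (volume : Measure (Fin K → AddCircle (1 : ℝ)))) :
    ∀ᵐ ω ∂(volume : Measure Ωp),
      (dHankel N₁ N₂ h
          (fun j : Fin N => ∑ k, (r k : ℂ) * (AddCircle.toCircle (u ω k) : ℂ) * z k ^ (j : ℕ))).rank
          = K ∧
        LinearMap.range (dHankel N₁ N₂ h
          (fun j : Fin N => ∑ k, (r k : ℂ) * (AddCircle.toCircle (u ω k) : ℂ) * z k ^ (j : ℕ))).mulVecLin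
          = LinearMap.range (vandM N₁ z).mulVecLin :=
  statement11_general N N₁ N₂ K h hK1 hK2 hK3 z hz hzu r hr Ωp u hu habs
end

section
/- (2-D double Hankel decomposition.) Let N₁, N₂ be positive integers and write N₁ = N_{1,1} + N_{1,2} − 1, N₂ = N_{2,1} + N_{2,2} − 1. Let y ∈ ℂ^{N₁×N₂} with y_{j₁,j₂} = Σ_{k=1}^K s_k · z_{k,1}^{j₁−1} · z_{k,2}^{j₂−1}, where |z_{k,1}| = |z_{k,2}| = 1 for all k. Let H(y) be the (N_{1,1}·N_{2,1}) × (N_{1,2}·N_{2,2}) 2-level Hankel matrix with entry at row index (j₁,j₂) and column index (l₁,l₂) equal to y_{j₁+l₁−1, j₂+l₂−1}, and for l = 1,2 let 𝐉_l = J_{N_{1,l}} ⊗ J_{N_{2,l}} (Kronecker product of reversal matrices). For l = 1,2 let A_l = A_{N_{1,l}}(z_{·,1}) ⋆ A_{N_{2,l}}(z_{·,2}) be the Khatri–Rao (column-wise Kronecker) product of the Vandermonde matrices in the two dimensions, S = diag(s₁,…,s_K), and Z_d = diag(z_{1,d},…,z_{K,d}) for d = 1,2. Then H(y) = A₁·S·A₂ᵀ,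 𝐉₁·conj(H(y))·𝐉₂ = A₁·conj(S)·Z₁^{1−N₁}·Z₂^{1−N₂}·A₂ᵀ, and consequently rank([H(y) | 𝐉₁·conj(H(y))·𝐉₂]) ≤ K. -/
/-!
The sample `y_{j₁+l₁, j₂+l₂}` is `∑ₖ (z₁ₖ^{j₁} z₂ₖ^{j₂}) sₖ (z₁ₖ^{l₁} z₂ₖ^{l₂})`, which is the
factorisation `H(y) = A₁ S A₂ᵀ`. Reversing both index ranges of `conj H(y)` gives the Hankel
matrix of the signal `conj y_{N₁-1-j₁, N₂-1-j₂}`; since `conj z = z⁻¹` on the unit circle, this is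
again a sum of the same exponentials, with amplitudes `conj sₖ · z₁ₖ^{1-N₁} · z₂ₖ^{1-N₂}`. Both
blocks of `[H(y) | 𝐉₁ conj H(y) 𝐉₂]` thus factor through the `K` columns of `A₁`.
-/

open Matrix
open scoped Kronecker

/-- The 2-level Hankel matrix of a 2-D signal `y ∈ ℂ^{N₁ × N₂}`, of size
`(N₁₁·N₂₁) × (N₁₂·N₂₂)` where `N₁₁ + N₁₂ = N₁ + 1` and `N₂₁ + N₂₂ = N₂ + 1`:
the entry at row `(j₁, j₂)` and column `(l₁, l₂)` is `y_{j₁+l₁, j₂+l₂}`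
(0-based indexing). -/
noncomputable def hankel2 {N₁ N₂ : ℕ} (N11 N12 N21 N22 : ℕ)
    (h1 : N11 + N12 = N₁ + 1) (h2 : N21 + N22 = N₂ + 1)
    (y : Fin N₁ → Fin N₂ → ℂ) :
    Matrix (Fin N11 × Fin N21) (Fin N12 × Fin N22) ℂ :=
  fun p q => y ⟨p.1.1 + q.1.1, by have := p.1.2; have := q.1.2; omega⟩
               ⟨p.2.1 + q.2.1, by have := p.2.2; have := q.2.2; omega⟩

/-- The Khatri–Rao (column-wise Kronecker) product of the two Vandermonde matrices
`A_{m₁}(z₁)` and `A_{m₂}(z₂)`: its `k`-th column is the Kronecker product of the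
`k`-th columns, i.e. a sampled 2-D sinusoid with pole `(z₁ₖ, z₂ₖ)`. -/
noncomputable def krVand (m₁ m₂ : ℕ) {K : ℕ} (z₁ z₂ : Fin K → ℂ) :
    Matrix (Fin m₁ × Fin m₂) (Fin K) ℂ :=
  fun p k => z₁ k ^ (p.1 : ℕ) * z₂ k ^ (p.2 : ℕ)

lemma one_submatrix_id_mul {l m n α : Type*} [Fintype m] [DecidableEq m] [NonAssocSemiring α]
    (e : l → m) (M : Matrix m n α) :
    (1 : Matrix m m α).submatrix e id * M = M.submatrix e id := by
  simpa using (submatrix_mul 1 M e id id Function.bijective_id).symm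

lemma revM_eq_one_submatrix (m : ℕ) :
    revM m = (1 : Matrix (Fin m) (Fin m) ℂ).submatrix Fin.rev id := by
  ext i j
  simp only [revM, submatrix_apply, one_apply, id, Fin.ext_iff, Fin.val_rev]
  congr 1
  apply propext
  omega

lemma revM_transpose (m : ℕ) : (revM m)ᵀ = revM m := by
  ext i j
  simp only [revM, transpose_apply, add_comm (j : ℕ)]

lemma revM_kronecker_revM_mul {m m' : ℕ} {n : Type*} (M : Matrix (Fin m × Fin m') n ℂ) :
    (revM m ⊗ₖ revM m') * M = M.submatrix (Prod.map Fin.rev Fin.rev) id := by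
  rw [revM_eq_one_submatrix, revM_eq_one_submatrix, kroneckerMap_submatrix_submatrix,
    one_kronecker_one]
  exact one_submatrix_id_mul _ M

lemma mul_revM_kronecker_revM {m m' : ℕ} {n : Type*} [Fintype n]
    (M : Matrix n (Fin m × Fin m') ℂ) :
    M * (revM m ⊗ₖ revM m') = M.submatrix id (Prod.map Fin.rev Fin.rev) := by
  rw [← transpose_transpose (M * _), transpose_mul, ← kroneckerMap_transpose, revM_transpose,
    revM_transpose, revM_kronecker_revM_mul]
  rfl

lemma hankel2_eq_krVand_mul_diagonal_mul_transpose {N₁ N₂ N11 N12 N21 N22 K : ℕ}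
    (h1 : N11 + N12 = N₁ + 1) (h2 : N21 + N22 = N₂ + 1) (z₁ z₂ s : Fin K → ℂ)
    {y : Fin N₁ → Fin N₂ → ℂ}
    (hy : ∀ j₁ j₂, y j₁ j₂ = ∑ k, s k * z₁ k ^ (j₁ : ℕ) * z₂ k ^ (j₂ : ℕ)) :
    hankel2 N11 N12 N21 N22 h1 h2 y =
      krVand N11 N21 z₁ z₂ * diagonal s * (krVand N12 N22 z₁ z₂)ᵀ := by
  ext p q
  rw [mul_apply]
  simp only [hankel2, hy, krVand, mul_diagonal, transpose_apply, pow_add]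
  refine Finset.sum_congr rfl fun k _ => ?_
  ring

lemma revM_kronecker_mul_map_conj_hankel2_mul {N₁ N₂ N11 N12 N21 N22 : ℕ}
    (h1 : N11 + N12 = N₁ + 1) (h2 : N21 + N22 = N₂ + 1) (y : Fin N₁ → Fin N₂ → ℂ) :
    (revM N11 ⊗ₖ revM N21) * (hankel2 N11 N12 N21 N22 h1 h2 y).map (starRingEnd ℂ) *
        (revM N12 ⊗ₖ revM N22) =
      hankel2 N11 N12 N21 N22 h1 h2 (fun j₁ j₂ => starRingEnd ℂ (y j₁.rev j₂.rev)) := by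
  rw [revM_kronecker_revM_mul, mul_revM_kronecker_revM]
  ext p q
  have := p.1.2; have := p.2.2; have := q.1.2; have := q.2.2
  simp only [hankel2, submatrix_apply, map_apply, id, Prod.map_fst, Prod.map_snd]
  congr 2 <;> ext <;> simp only [Fin.val_rev] <;> omega

lemma conj_pow_rev_of_norm_eq_one {w : ℂ} (hw : ‖w‖ = 1) {N : ℕ} (j : Fin N) :
    starRingEnd ℂ w ^ (j.rev : ℕ) = w ^ ((1 : ℤ) - N) * w ^ (j : ℕ) := by
  have hw0 : w ≠ 0 := norm_ne_zero_iff.mp (by rw [hw]; exact one_ne_zero)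
  rw [← Complex.inv_eq_conj hw, inv_pow, ← zpow_natCast, ← zpow_natCast, ← _root_.zpow_neg,
    ← zpow_add₀ hw0, Fin.val_rev]
  congr 1
  have := j.2
  omega

lemma conj_apply_rev_eq_sum {N₁ N₂ K : ℕ} {z₁ z₂ : Fin K → ℂ} (hz₁ : ∀ k, ‖z₁ k‖ = 1)
    (hz₂ : ∀ k, ‖z₂ k‖ = 1) {s : Fin K → ℂ} {y : Fin N₁ → Fin N₂ → ℂ}
    (hy : ∀ j₁ j₂, y j₁ j₂ = ∑ k, s k * z₁ k ^ (j₁ : ℕ) * z₂ k ^ (j₂ : ℕ)) (j₁ : Fin N₁)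
    (j₂ : Fin N₂) :
    starRingEnd ℂ (y j₁.rev j₂.rev) =
      ∑ k, starRingEnd ℂ (s k) * z₁ k ^ ((1 : ℤ) - N₁) * z₂ k ^ ((1 : ℤ) - N₂) *
        z₁ k ^ (j₁ : ℕ) * z₂ k ^ (j₂ : ℕ) := by
  simp only [hy, map_sum, map_mul, map_pow, conj_pow_rev_of_norm_eq_one (hz₁ _),
    conj_pow_rev_of_norm_eq_one (hz₂ _)]
  refine Finset.sum_congr rfl fun k _ => ?_
  ring

lemma rank_fromCols_mul_mul_le {R m n₁ n₂ k : Type*} [CommRing R] [StrongRankCondition R]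
    [Fintype k] [Fintype n₁] [Fintype n₂] (A : Matrix m k R) (B : Matrix k n₁ R)
    (C : Matrix k n₂ R) :
    (fromCols (A * B) (A * C)).rank ≤ Fintype.card k := by
  rw [← mul_fromCols]
  exact (rank_mul_le_left _ _).trans (rank_le_card_width A)

theorem statement19_general (N₁ N₂ N11 N12 N21 N22 K : ℕ)
    (h1 : N11 + N12 = N₁ + 1) (h2 : N21 + N22 = N₂ + 1)
    (z₁ z₂ : Fin K → ℂ) (hz₁ : ∀ k, ‖z₁ k‖ = 1)
    (hz₂ : ∀ k, ‖z₂ k‖ = 1) (s : Fin K → ℂ)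
    (y : Fin N₁ → Fin N₂ → ℂ)
    (hy : ∀ (j₁ : Fin N₁) (j₂ : Fin N₂),
      y j₁ j₂ = ∑ k, s k * z₁ k ^ (j₁ : ℕ) * z₂ k ^ (j₂ : ℕ)) :
    hankel2 N11 N12 N21 N22 h1 h2 y =
        krVand N11 N21 z₁ z₂ * Matrix.diagonal s * (krVand N12 N22 z₁ z₂)ᵀ ∧
      (revM N11 ⊗ₖ revM N21) * (hankel2 N11 N12 N21 N22 h1 h2 y).map (starRingEnd ℂ) *
          (revM N12 ⊗ₖ revM N22) =
        krVand N11 N21 z₁ z₂ * Matrix.diagonal (fun k => starRingEnd ℂ (s k)) *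
          Matrix.diagonal (fun k => z₁ k ^ ((1 : ℤ) - (N₁ : ℤ))) *
          Matrix.diagonal (fun k => z₂ k ^ ((1 : ℤ) - (N₂ : ℤ))) *
          (krVand N12 N22 z₁ z₂)ᵀ ∧
      (Matrix.fromCols (hankel2 N11 N12 N21 N22 h1 h2 y)
          ((revM N11 ⊗ₖ revM N21) *
            (hankel2 N11 N12 N21 N22 h1 h2 y).map (starRingEnd ℂ) *
            (revM N12 ⊗ₖ revM N22))).rank ≤ K := by
  have hH := hankel2_eq_krVand_mul_diagonal_mul_transpose h1 h2 z₁ z₂ s hy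
  have hJH : (revM N11 ⊗ₖ revM N21) * (hankel2 N11 N12 N21 N22 h1 h2 y).map (starRingEnd ℂ) *
      (revM N12 ⊗ₖ revM N22) = krVand N11 N21 z₁ z₂ *
        diagonal (fun k => starRingEnd ℂ (s k) * z₁ k ^ ((1 : ℤ) - N₁) * z₂ k ^ ((1 : ℤ) - N₂)) *
        (krVand N12 N22 z₁ z₂)ᵀ := by
    rw [revM_kronecker_mul_map_conj_hankel2_mul]
    exact hankel2_eq_krVand_mul_diagonal_mul_transpose h1 h2 z₁ z₂ _
      (conj_apply_rev_eq_sum hz₁ hz₂ hy)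
  refine ⟨hH, by simpa only [Matrix.mul_assoc, diagonal_mul_diagonal] using hJH, ?_⟩
  rw [hJH, hH, Matrix.mul_assoc, Matrix.mul_assoc]
  simpa using rank_fromCols_mul_mul_le (krVand N11 N21 z₁ z₂) _ _

theorem statement19 (N₁ N₂ N11 N12 N21 N22 K : ℕ)
    (hN11 : 0 < N11) (hN12 : 0 < N12) (hN21 : 0 < N21) (hN22 : 0 < N22) (hK : 0 < K)
    (h1 : N11 + N12 = N₁ + 1) (h2 : N21 + N22 = N₂ + 1)
    (z₁ z₂ : Fin K → ℂ) (hz₁ : ∀ k, ‖z₁ k‖ = 1)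
    (hz₂ : ∀ k, ‖z₂ k‖ = 1) (s : Fin K → ℂ)
    (y : Fin N₁ → Fin N₂ → ℂ)
    (hy : ∀ (j₁ : Fin N₁) (j₂ : Fin N₂),
      y j₁ j₂ = ∑ k, s k * z₁ k ^ (j₁ : ℕ) * z₂ k ^ (j₂ : ℕ)) :
    hankel2 N11 N12 N21 N22 h1 h2 y =
        krVand N11 N21 z₁ z₂ * Matrix.diagonal s * (krVand N12 N22 z₁ z₂)ᵀ ∧
      (revM N11 ⊗ₖ revM N21) * (hankel2 N11 N12 N21 N22 h1 h2 y).map (starRingEnd ℂ) *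
          (revM N12 ⊗ₖ revM N22) =
        krVand N11 N21 z₁ z₂ * Matrix.diagonal (fun k => starRingEnd ℂ (s k)) *
          Matrix.diagonal (fun k => z₁ k ^ ((1 : ℤ) - (N₁ : ℤ))) *
          Matrix.diagonal (fun k => z₂ k ^ ((1 : ℤ) - (N₂ : ℤ))) *
          (krVand N12 N22 z₁ z₂)ᵀ ∧
      (Matrix.fromCols (hankel2 N11 N12 N21 N22 h1 h2 y)
          ((revM N11 ⊗ₖ revM N21) *
            (hankel2 N11 N12 N21 N22 h1 h2 y).map (starRingEnd ℂ) *
            (revM N12 ⊗ₖ revM N22))).rank ≤ K :=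
  statement19_general N₁ N₂ N11 N12 N21 N22 K h1 h2 z₁ z₂ hz₁ hz₂ s y hy
end
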